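/- arXiv:2311.00224 — 3 statements merged into one kernel-verified Lean document; each statement's English description precedes it below -/
import Mathlib

section
/- Let 0 < γ₂ < γ₁ < 1 and ν > 0. Any solution w of -ν w'' + w' = 0 on (0,γ₁) with w(0) = 0 satisfies |w(γ₂)| ≤ ρ₁ |w(γ₁)| where ρ₁ = (e^{γ₂/ν} - 1)/(e^{γ₁/ν} - 1) < 1. -/
/-!
Since `-ν w'' + w' = 0` says that `e^{-x/ν} w'` is constant, every solution on `[0, γ₁]` with
`w 0 = 0` is a multiple of `e^{x/ν} - 1`. Hence `w γ₂ = ρ₁ w γ₁` exactly, and `ρ₁ < 1` because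
`exp` is increasing.
-/

open Real Set

theorem eq_of_hasDerivAt_zero_Ioo {f : ℝ → ℝ} {a b : ℝ} (hf : ContinuousOn f (Icc a b))
    (hf' : ∀ x ∈ Ioo a b, HasDerivAt f 0 x) : ∀ x ∈ Icc a b, f x = f a := by
  intro x ⟨hax, hxb⟩
  rcases hax.eq_or_lt with rfl | hax
  · rfl
  obtain ⟨c, -, hslope⟩ := exists_hasDerivAt_eq_slope f (fun _ => 0) hax
    (hf.mono (Icc_subset_Icc_right hxb)) fun y hy => hf' y ⟨hy.1, hy.2.trans_le hxb⟩
  rw [eq_comm, div_eq_zero_iff, sub_eq_zero] at hslope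
  exact hslope.resolve_right (sub_ne_zero.2 hax.ne')

theorem eq_mul_exp_of_hasDerivAt_const_mul {u : ℝ → ℝ} {k a b : ℝ}
    (hu : ContinuousOn u (Icc a b)) (hu' : ∀ x ∈ Ioo a b, HasDerivAt u (k * u x) x) :
    ∀ x ∈ Icc a b, u x = u a * exp (k * (x - a)) := by
  have hexp : ∀ x, HasDerivAt (fun y => exp (-(k * (y - a)))) (exp (-(k * (x - a))) * -k) x :=
    fun x => by simpa using (((hasDerivAt_id x).sub_const a).const_mul k).neg.exp
  have hconst := eq_of_hasDerivAt_zero_Ioo (f := fun x => u x * exp (-(k * (x - a))))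
    (hu.mul (by fun_prop)) fun x hx => ((hu' x hx).mul (hexp x)).congr_deriv (by ring)
  intro x hx
  have hx' := hconst x hx
  simp only [sub_self, mul_zero, neg_zero, exp_zero, mul_one, exp_neg] at hx'
  rw [← hx', mul_assoc, inv_mul_cancel₀ (exp_pos _).ne', mul_one]

theorem eq_of_neg_mul_deriv_deriv_add_deriv_eq_zero {w : ℝ → ℝ} {ν a b : ℝ} (hν : ν ≠ 0)
    (hw : ContDiff ℝ 2 w) (heq : ∀ x ∈ Ioo a b, -ν * deriv (deriv w) x + deriv w x = 0) :
    ∀ x ∈ Icc a b, w x = w a + ν * deriv w a * (exp ((x - a) / ν) - 1) := by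
  have hdw : Differentiable ℝ w := hw.differentiable (by norm_num)
  have hddw : Differentiable ℝ (deriv w) :=
    (hw.iterate_deriv' 1 1).differentiable (by norm_num)
  have hw' : ∀ x ∈ Icc a b, deriv w x = deriv w a * exp ((x - a) / ν) := by
    intro x hx
    rw [eq_mul_exp_of_hasDerivAt_const_mul (k := 1 / ν) hddw.continuous.continuousOn
      (fun y hy => (hddw y).hasDerivAt.congr_deriv ?_) x hx, one_div_mul_eq_div]
    field_simp
    linarith [heq y hy]
  have hconst := eq_of_hasDerivAt_zero_Ioo
    (f := fun x => w x - ν * deriv w a * exp ((x - a) / ν))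
    (hdw.continuous.sub (by fun_prop)).continuousOn fun x hx => by
      have hexp := (((hasDerivAt_id' x).sub_const a).div_const ν).exp.const_mul (ν * deriv w a)
      refine ((hdw x).hasDerivAt.sub hexp).congr_deriv ?_
      rw [hw' x (Ioo_subset_Icc_self hx)]
      field_simp
      ring
  intro x hx
  have hx' := hconst x hx
  simp only [sub_self, zero_div, exp_zero, mul_one] at hx'
  linear_combination hx'

theorem schwarz_contraction_left_general (ν γ₁ γ₂ : ℝ) (hν : 0 < ν)
    (h0 : 0 < γ₂) (h21 : γ₂ < γ₁)
    (w : ℝ → ℝ) (hw : ContDiff ℝ 2 w)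
    (heq : ∀ x ∈ Ioo (0 : ℝ) γ₁, -ν * deriv (deriv w) x + deriv w x = 0)
    (hw0 : w 0 = 0) :
    |w γ₂| ≤ (exp (γ₂ / ν) - 1) / (exp (γ₁ / ν) - 1) * |w γ₁| ∧
      (exp (γ₂ / ν) - 1) / (exp (γ₁ / ν) - 1) < 1 := by
  have hsol := eq_of_neg_mul_deriv_deriv_add_deriv_eq_zero hν.ne' hw heq
  simp only [hw0, sub_zero, zero_add] at hsol
  have hE₂ : 1 < exp (γ₂ / ν) := one_lt_exp_iff.2 (div_pos h0 hν)
  have hE₁₂ : exp (γ₂ / ν) < exp (γ₁ / ν) := exp_lt_exp.2 (by gcongr)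
  have hE₁ : 0 < exp (γ₁ / ν) - 1 := by linarith
  refine ⟨le_of_eq ?_, (div_lt_one hE₁).2 (by linarith)⟩
  rw [hsol γ₂ ⟨h0.le, h21.le⟩, hsol γ₁ ⟨h0.le.trans h21.le, le_rfl⟩, abs_mul (ν * deriv w 0),
    abs_mul (ν * deriv w 0), abs_of_pos (sub_pos.2 hE₂), abs_of_pos hE₁]
  field_simp

theorem schwarz_contraction_left (ν γ₁ γ₂ : ℝ) (hν : 0 < ν)
    (h0 : 0 < γ₂) (h21 : γ₂ < γ₁) (h1 : γ₁ < 1)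
    (w : ℝ → ℝ) (hw : ContDiff ℝ 2 w)
    (heq : ∀ x ∈ Ioo (0 : ℝ) γ₁, -ν * deriv (deriv w) x + deriv w x = 0)
    (hw0 : w 0 = 0) :
    |w γ₂| ≤ (exp (γ₂ / ν) - 1) / (exp (γ₁ / ν) - 1) * |w γ₁| ∧
      (exp (γ₂ / ν) - 1) / (exp (γ₁ / ν) - 1) < 1 :=
  schwarz_contraction_left_general ν γ₁ γ₂ hν h0 h21 w hw heq hw0
end

section
/- Convergence of the Schwarz alternating method in 1D: with ν > 0, 0 < γ₂ < γ₁ < 1, define the Schwarz iterates u₁^{(n)} on (0,γ₁) and u₂^{(n)} on (γ₂,1) by solving -ν u'' + u' = 1 with u₁^{(n+1)}(0)=0, u₁^{(n+1)}(γ₁)=u₂^{(n)}(γ₁), u₂^{(n+1)}(1)=0, u₂^{(n+1)}(γ₂)=u₁^{(n+1)}(γ₂), starting from u₂^{(0)}(γ₁)=0. Then the errors e_i^{(n)} = u_i^{(n)} - u|_{Ω_i} satisfy sup|e_i^{(n)}| ≤ (ρ₁ρ₂)^{n-1} C for a constant C, where ρ₁ρ₂ < 1; hence u_i^{(n)} converges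 uniformly to the exact solution u on each subdomain. -/
/-!
Each error `uᵢ⁽ⁿ⁾ - u` solves `-ν e'' + e' = 0`, whose solutions are `A + B exp (x / ν)`, so it is
determined by its two boundary values. Since it vanishes at the outer endpoint of its subdomain, it
is its value at the interface times an exponential profile with values in `[0, 1]` (the maximum
principle). Evaluating the profile of `Ω₁` at `γ₂` gives `ρ₁`, that of `Ω₂` at `γ₁` gives `ρ₂`, so
one sweep multiplies the interface error at `γ₁` by `ρ₁ ρ₂`, and the error at step `n` is bounded
by `(ρ₁ ρ₂)ⁿ⁻¹ |u γ₁|` on both subdomains.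
-/

open Real Set Filter Topology

lemma strictMono_exp_div {ν : ℝ} (hν : 0 < ν) : StrictMono fun t => exp (t / ν) :=
  exp_strictMono.comp (strictMono_id.div_const hν)

lemma sub_div_sub_mem_Icc {p q r : ℝ} (hpq : p ≤ q) (hqr : q ≤ r) (hpr : p < r) :
    (q - p) / (r - p) ∈ Icc 0 1 :=
  ⟨div_nonneg (sub_nonneg.2 hpq) (sub_nonneg.2 hpr.le),
    div_le_one_of_le₀ (by linarith) (by linarith)⟩

lemma sub_div_sub_mem_Ioo {p q r : ℝ} (hpq : p < q) (hqr : q < r) :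
    (q - p) / (r - p) ∈ Ioo 0 1 :=
  ⟨div_pos (sub_pos.2 hpq) (sub_pos.2 (hpq.trans hqr)),
    (div_lt_one (by linarith)).2 (by linarith)⟩

lemma abs_mul_le_of_mem_Icc (c : ℝ) {w : ℝ} (hw : w ∈ Icc (0 : ℝ) 1) : |c * w| ≤ |c| := by
  rw [abs_mul, abs_of_nonneg hw.1]
  exact mul_le_of_le_one_right (abs_nonneg c) hw.2

lemma eq_of_hasDerivAt_zero_on_Ioo {F : ℝ → ℝ} {a b : ℝ} (hF : Continuous F)
    (hF' : ∀ x ∈ Ioo a b, HasDerivAt F 0 x) : ∀ x ∈ Icc a b, F x = F a := by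
  rintro x ⟨hax, hxb⟩
  rcases hax.eq_or_lt with rfl | hax
  · rfl
  obtain ⟨c, -, hslope⟩ := exists_hasDerivAt_eq_slope F (fun _ => 0) hax hF.continuousOn
    fun y hy => hF' y ⟨hy.1, hy.2.trans_le hxb⟩
  rw [eq_comm, div_eq_zero_iff, sub_eq_zero] at hslope
  exact hslope.resolve_right (sub_ne_zero.2 hax.ne')

section ODE

variable {ν a b : ℝ} {f g r : ℝ → ℝ}

lemma exists_eq_add_mul_exp_of_ode (hν : ν ≠ 0) (hf : ContDiff ℝ 2 f)
    (hode : ∀ x ∈ Ioo a b, -ν * deriv (deriv f) x + deriv f x = 0) :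
    ∃ A B : ℝ, ∀ x ∈ Icc a b, f x = A + B * exp (x / ν) := by
  have hf' : ContDiff ℝ 1 (deriv f) := hf.deriv' (n := 1)
  have hexp (x : ℝ) : HasDerivAt (fun y => exp (y / ν)) (exp (x / ν) / ν) x := by
    simpa [div_eq_mul_inv] using ((hasDerivAt_id x).div_const ν).exp
  -- `f'' = f' / ν` on `(a, b)`, so `f' / exp (x / ν)` is constant
  obtain ⟨K, hderiv⟩ : ∃ K, ∀ x ∈ Icc a b, deriv f x = K * exp (x / ν) := by
    have hconst := eq_of_hasDerivAt_zero_on_Ioo (F := fun x => deriv f x / exp (x / ν))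
      (hf'.continuous.div (by fun_prop) fun _ => exp_ne_zero _) fun x hx => by
        refine ((hf'.differentiable one_ne_zero x).hasDerivAt.div (hexp x)
          (exp_ne_zero _)).congr_deriv ?_
        have hf'' : deriv (deriv f) x = deriv f x / ν := by
          field_simp
          linarith [hode x hx]
        rw [hf'']
        ring
    refine ⟨deriv f a / exp (a / ν), fun x hx => ?_⟩
    rw [← hconst x hx, div_mul_cancel₀ _ (exp_ne_zero _)]
  refine ⟨f a - ν * K * exp (a / ν), ν * K, fun x hx => ?_⟩
  have hconst := eq_of_hasDerivAt_zero_on_Ioo (F := fun x => f x - ν * K * exp (x / ν))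
    (by fun_prop) fun x hx => by
      refine ((hf.differentiable two_ne_zero x).hasDerivAt.sub
        ((hexp x).const_mul (ν * K))).congr_deriv ?_
      rw [hderiv x (Ioo_subset_Icc_self hx)]
      field_simp
      ring
  linear_combination hconst x hx

lemma eq_interp_of_ode (hν : ν ≠ 0) (hab : a < b) (hf : ContDiff ℝ 2 f)
    (hode : ∀ x ∈ Ioo a b, -ν * deriv (deriv f) x + deriv f x = 0) :
    ∀ x ∈ Icc a b, f x =
      (f a * (exp (b / ν) - exp (x / ν)) + f b * (exp (x / ν) - exp (a / ν))) /
        (exp (b / ν) - exp (a / ν)) := by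
  obtain ⟨A, B, hAB⟩ := exists_eq_add_mul_exp_of_ode hν hf hode
  have hne : exp (b / ν) - exp (a / ν) ≠ 0 :=
    sub_ne_zero.2 (exp_injective.ne (by rw [Ne, div_left_inj' hν]; exact hab.ne'))
  intro x hx
  rw [eq_div_iff hne, hAB x hx, hAB a (left_mem_Icc.2 hab.le), hAB b (right_mem_Icc.2 hab.le)]
  ring

lemma sub_eq_interp_of_ode (hν : ν ≠ 0) (hab : a < b)
    (hf : ContDiff ℝ 2 f) (hg : ContDiff ℝ 2 g)
    (hfeq : ∀ x ∈ Ioo a b, -ν * deriv (deriv f) x + deriv f x = r x)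
    (hgeq : ∀ x ∈ Ioo a b, -ν * deriv (deriv g) x + deriv g x = r x) :
    ∀ x ∈ Icc a b, f x - g x = ((f a - g a) * (exp (b / ν) - exp (x / ν)) +
      (f b - g b) * (exp (x / ν) - exp (a / ν))) / (exp (b / ν) - exp (a / ν)) := by
  refine eq_interp_of_ode (f := f - g) hν hab (hf.sub hg) fun x hx => ?_
  have hd : deriv (f - g) = deriv f - deriv g := funext fun y =>
    deriv_sub (hf.differentiable two_ne_zero y) (hg.differentiable two_ne_zero y)
  rw [hd, deriv_sub ((hf.deriv' (n := 1)).differentiable one_ne_zero x)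
    ((hg.deriv' (n := 1)).differentiable one_ne_zero x), Pi.sub_apply]
  linarith [hfeq x hx, hgeq x hx]

lemma sub_eq_mul_of_ode_of_eq_left (hν : ν ≠ 0) (hab : a < b)
    (hf : ContDiff ℝ 2 f) (hg : ContDiff ℝ 2 g)
    (hfeq : ∀ x ∈ Ioo a b, -ν * deriv (deriv f) x + deriv f x = r x)
    (hgeq : ∀ x ∈ Ioo a b, -ν * deriv (deriv g) x + deriv g x = r x) (hfga : f a = g a) :
    ∀ x ∈ Icc a b, f x - g x =
      (f b - g b) * ((exp (x / ν) - exp (a / ν)) / (exp (b / ν) - exp (a / ν))) := by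
  intro x hx
  rw [sub_eq_interp_of_ode hν hab hf hg hfeq hgeq x hx, hfga, sub_self, zero_mul, zero_add,
    mul_div_assoc]

lemma sub_eq_mul_of_ode_of_eq_right (hν : ν ≠ 0) (hab : a < b)
    (hf : ContDiff ℝ 2 f) (hg : ContDiff ℝ 2 g)
    (hfeq : ∀ x ∈ Ioo a b, -ν * deriv (deriv f) x + deriv f x = r x)
    (hgeq : ∀ x ∈ Ioo a b, -ν * deriv (deriv g) x + deriv g x = r x) (hfgb : f b = g b) :
    ∀ x ∈ Icc a b, f x - g x =
      (f a - g a) * ((exp (b / ν) - exp (x / ν)) / (exp (b / ν) - exp (a / ν))) := by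
  intro x hx
  rw [sub_eq_interp_of_ode hν hab hf hg hfeq hgeq x hx, hfgb, sub_self, zero_mul, add_zero,
    mul_div_assoc]

lemma abs_sub_le_of_ode_of_eq_left (hν : 0 < ν) (hab : a < b)
    (hf : ContDiff ℝ 2 f) (hg : ContDiff ℝ 2 g)
    (hfeq : ∀ x ∈ Ioo a b, -ν * deriv (deriv f) x + deriv f x = r x)
    (hgeq : ∀ x ∈ Ioo a b, -ν * deriv (deriv g) x + deriv g x = r x) (hfga : f a = g a) :
    ∀ x ∈ Icc a b, |f x - g x| ≤ |f b - g b| := by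
  have hexp := strictMono_exp_div hν
  intro x hx
  rw [sub_eq_mul_of_ode_of_eq_left hν.ne' hab hf hg hfeq hgeq hfga x hx]
  exact abs_mul_le_of_mem_Icc _
    (sub_div_sub_mem_Icc (hexp.monotone hx.1) (hexp.monotone hx.2) (hexp hab))

lemma abs_sub_le_of_ode_of_eq_right (hν : 0 < ν) (hab : a < b)
    (hf : ContDiff ℝ 2 f) (hg : ContDiff ℝ 2 g)
    (hfeq : ∀ x ∈ Ioo a b, -ν * deriv (deriv f) x + deriv f x = r x)
    (hgeq : ∀ x ∈ Ioo a b, -ν * deriv (deriv g) x + deriv g x = r x) (hfgb : f b = g b) :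
    ∀ x ∈ Icc a b, |f x - g x| ≤ |f a - g a| := by
  have hexp := strictMono_exp_div hν
  intro x hx
  rw [sub_eq_mul_of_ode_of_eq_right hν.ne' hab hf hg hfeq hgeq hfgb x hx]
  refine abs_mul_le_of_mem_Icc _ ?_
  simpa only [neg_sub_neg] using sub_div_sub_mem_Icc (neg_le_neg (hexp.monotone hx.2))
    (neg_le_neg (hexp.monotone hx.1)) (neg_lt_neg (hexp hab))

end ODE

lemma schwarz_factors_mem_Ioo {ν γ₁ γ₂ : ℝ} (hν : 0 < ν) (h0 : 0 < γ₂) (h21 : γ₂ < γ₁)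
    (h1 : γ₁ < 1) :
    (exp (γ₂ / ν) - 1) / (exp (γ₁ / ν) - 1) ∈ Ioo 0 1 ∧
      (exp (1 / ν) - exp (γ₁ / ν)) / (exp (1 / ν) - exp (γ₂ / ν)) ∈ Ioo 0 1 := by
  have hexp := strictMono_exp_div hν
  constructor
  · simpa only [zero_div, exp_zero] using sub_div_sub_mem_Ioo (hexp h0) (hexp h21)
  · simpa only [neg_sub_neg] using
      sub_div_sub_mem_Ioo (neg_lt_neg (hexp h1)) (neg_lt_neg (hexp h21))

lemma tendstoUniformlyOn_of_abs_sub_le_pow {α : Type*} {F : ℕ → α → ℝ} {f : α → ℝ} {s : Set α}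
    {r C : ℝ} (hr₀ : 0 ≤ r) (hr₁ : r < 1)
    (hF : ∀ n, 1 ≤ n → ∀ x ∈ s, |F n x - f x| ≤ r ^ (n - 1) * C) :
    TendstoUniformlyOn F f atTop s := by
  have hlim : Tendsto (fun n => r ^ (n - 1) * C) atTop (𝓝 0) := by
    have h := (tendsto_pow_atTop_nhds_zero_of_lt_one hr₀ hr₁).mul_const C
    rw [zero_mul] at h
    exact h.comp (tendsto_sub_atTop_nat 1)
  rw [Metric.tendstoUniformlyOn_iff]
  intro ε hε
  filter_upwards [hlim.eventually (gt_mem_nhds hε), eventually_ge_atTop 1] with n hn hn₁ x hx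
  rw [dist_comm, Real.dist_eq]
  exact (hF n hn₁ x hx).trans_lt hn

theorem schwarz_alternating_convergence (ν γ₁ γ₂ : ℝ) (hν : 0 < ν)
    (h0 : 0 < γ₂) (h21 : γ₂ < γ₁) (h1 : γ₁ < 1)
    (u : ℝ → ℝ) (hu : ContDiff ℝ 2 u)
    (hueq : ∀ x ∈ Ioo (0 : ℝ) 1, -ν * deriv (deriv u) x + deriv u x = 1)
    (hu0 : u 0 = 0) (hu1 : u 1 = 0)
    (u₁ u₂ : ℕ → ℝ → ℝ)
    (hu₁smooth : ∀ n, ContDiff ℝ 2 (u₁ n)) (hu₂smooth : ∀ n, ContDiff ℝ 2 (u₂ n))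
    (hu₁eq : ∀ n, ∀ x ∈ Ioo (0 : ℝ) γ₁,
      -ν * deriv (deriv (u₁ (n + 1))) x + deriv (u₁ (n + 1)) x = 1)
    (hu₂eq : ∀ n, ∀ x ∈ Ioo γ₂ (1 : ℝ),
      -ν * deriv (deriv (u₂ (n + 1))) x + deriv (u₂ (n + 1)) x = 1)
    (hbc₁0 : ∀ n, u₁ (n + 1) 0 = 0)
    (hbc₁γ : ∀ n, u₁ (n + 1) γ₁ = u₂ n γ₁)
    (hbc₂1 : ∀ n, u₂ (n + 1) 1 = 0)
    (hbc₂γ : ∀ n, u₂ (n + 1) γ₂ = u₁ (n + 1) γ₂)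
    (hinit : u₂ 0 γ₁ = 0) :
    (exp (γ₂ / ν) - 1) / (exp (γ₁ / ν) - 1) *
        ((exp (1 / ν) - exp (γ₁ / ν)) / (exp (1 / ν) - exp (γ₂ / ν))) < 1 ∧
    ∃ C : ℝ,
      (∀ n : ℕ, 1 ≤ n → ∀ x ∈ Icc (0 : ℝ) γ₁,
        |u₁ n x - u x| ≤
          ((exp (γ₂ / ν) - 1) / (exp (γ₁ / ν) - 1) *
            ((exp (1 / ν) - exp (γ₁ / ν)) / (exp (1 / ν) - exp (γ₂ / ν)))) ^ (n - 1) * C) ∧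
      (∀ n : ℕ, 1 ≤ n → ∀ x ∈ Icc γ₂ (1 : ℝ),
        |u₂ n x - u x| ≤
          ((exp (γ₂ / ν) - 1) / (exp (γ₁ / ν) - 1) *
            ((exp (1 / ν) - exp (γ₁ / ν)) / (exp (1 / ν) - exp (γ₂ / ν)))) ^ (n - 1) * C) ∧
      TendstoUniformlyOn (fun n => u₁ n) u atTop (Icc (0 : ℝ) γ₁) ∧
      TendstoUniformlyOn (fun n => u₂ n) u atTop (Icc γ₂ (1 : ℝ)) := by
  set ρ₁ := (exp (γ₂ / ν) - 1) / (exp (γ₁ / ν) - 1)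
  set ρ₂ := (exp (1 / ν) - exp (γ₁ / ν)) / (exp (1 / ν) - exp (γ₂ / ν))
  obtain ⟨hρ₁, hρ₂⟩ := schwarz_factors_mem_Ioo hν h0 h21 h1
  have hρ : ρ₁ * ρ₂ < 1 := mul_lt_one_of_nonneg_of_lt_one_left hρ₁.1.le hρ₁.2 hρ₂.2.le
  have hueq₁ : ∀ x ∈ Ioo 0 γ₁, -ν * deriv (deriv u) x + deriv u x = 1 :=
    fun x hx => hueq x ⟨hx.1, hx.2.trans h1⟩
  have hueq₂ : ∀ x ∈ Ioo γ₂ 1, -ν * deriv (deriv u) x + deriv u x = 1 :=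
    fun x hx => hueq x ⟨h0.trans hx.1, hx.2⟩
  have hΩ₁ := h0.trans h21
  have hΩ₂ := h21.trans h1
  have interface : ∀ n, |u₂ n γ₁ - u γ₁| = (ρ₁ * ρ₂) ^ n * |u γ₁| := by
    intro n
    induction n with
    | zero => simp [hinit]
    | succ n ih =>
      rw [sub_eq_mul_of_ode_of_eq_right hν.ne' hΩ₂ (hu₂smooth _) hu (hu₂eq n) hueq₂
          (by rw [hbc₂1, hu1]) γ₁ ⟨h21.le, h1.le⟩, hbc₂γ,
        sub_eq_mul_of_ode_of_eq_left hν.ne' hΩ₁ (hu₁smooth _) hu (hu₁eq n) hueq₁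
          (by rw [hbc₁0, hu0]) γ₂ ⟨h0.le, h21.le⟩]
      simp only [zero_div, exp_zero, hbc₁γ, abs_mul, ih, abs_of_pos hρ₁.1, abs_of_pos hρ₂.1]
      ring
  have bound₁ : ∀ n, 1 ≤ n → ∀ x ∈ Icc 0 γ₁,
      |u₁ n x - u x| ≤ (ρ₁ * ρ₂) ^ (n - 1) * |u γ₁| := by
    rintro (_ | n) hn x hx
    · omega
    rw [Nat.add_sub_cancel, ← interface n, ← hbc₁γ]
    exact abs_sub_le_of_ode_of_eq_left hν hΩ₁ (hu₁smooth _) hu (hu₁eq n) hueq₁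
      (by rw [hbc₁0, hu0]) x hx
  have bound₂ : ∀ n, 1 ≤ n → ∀ x ∈ Icc γ₂ 1,
      |u₂ n x - u x| ≤ (ρ₁ * ρ₂) ^ (n - 1) * |u γ₁| := by
    rintro (_ | n) hn x hx
    · omega
    rw [Nat.add_sub_cancel]
    calc |u₂ (n + 1) x - u x| ≤ |u₂ (n + 1) γ₂ - u γ₂| :=
          abs_sub_le_of_ode_of_eq_right hν hΩ₂ (hu₂smooth _) hu (hu₂eq n) hueq₂
            (by rw [hbc₂1, hu1]) x hx
      _ ≤ (ρ₁ * ρ₂) ^ n * |u γ₁| := by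
          rw [hbc₂γ]
          exact bound₁ (n + 1) n.succ_pos γ₂ ⟨h0.le, h21.le⟩
  exact ⟨hρ, |u γ₁|, bound₁, bound₂,
    tendstoUniformlyOn_of_abs_sub_le_pow (mul_pos hρ₁.1 hρ₂.1).le hρ bound₁,
    tendstoUniformlyOn_of_abs_sub_le_pow (mul_pos hρ₁.1 hρ₂.1).le hρ bound₂⟩
end

section
/- The Schwarz contraction factor ρ₁ρ₂ = [(e^{γ₂/ν}-1)(e^{1/ν}-e^{γ₁/ν})] / [(e^{γ₁/ν}-1)(e^{1/ν}-e^{γ₂/ν})] is strictly less than 1 if and only if γ₂ < γ₁ (i.e., the overlap is nonempty), for any ν > 0. -/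
/-!
Write `a = e^{γ₂/ν}`, `b = e^{γ₁/ν}`, `E = e^{1/ν}`. Both factors of the denominator are positive,
and the denominator exceeds the numerator by exactly `(E - 1)(b - a)`, so the quotient is below `1`
precisely when `a < b`, i.e. when `γ₂ < γ₁`.
-/

open Real Set

theorem sub_one_mul_sub_sub_sub_one_mul_sub {R : Type*} [CommRing R] (a b E : R) :
    (b - 1) * (E - a) - (a - 1) * (E - b) = (E - 1) * (b - a) := by
  ring

theorem sub_one_mul_sub_div_lt_one_iff {a b E : ℝ} (hb : 1 < b) (haE : a < E) (hE : 1 < E) :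
    (a - 1) * (E - b) / ((b - 1) * (E - a)) < 1 ↔ a < b := by
  have hden : 0 < (b - 1) * (E - a) := mul_pos (sub_pos.2 hb) (sub_pos.2 haE)
  rw [div_lt_one hden, ← sub_pos, sub_one_mul_sub_sub_sub_one_mul_sub,
    mul_pos_iff_of_pos_left (sub_pos.2 hE), sub_pos]

theorem schwarz_contraction_lt_one_iff_overlap (ν γ₁ γ₂ : ℝ) (hν : 0 < ν)
    (h0 : 0 < γ₂) (h21 : γ₂ ≤ γ₁) (h1 : γ₁ < 1) :
    (exp (γ₂ / ν) - 1) * (exp (1 / ν) - exp (γ₁ / ν)) /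
        ((exp (γ₁ / ν) - 1) * (exp (1 / ν) - exp (γ₂ / ν))) < 1 ↔ γ₂ < γ₁ := by
  have hb : 1 < exp (γ₁ / ν) := one_lt_exp_iff.2 (div_pos (h0.trans_le h21) hν)
  have haE : exp (γ₂ / ν) < exp (1 / ν) :=
    exp_lt_exp.2 (div_lt_div_of_pos_right (h21.trans_lt h1) hν)
  have hE : 1 < exp (1 / ν) := one_lt_exp_iff.2 (one_div_pos.2 hν)
  rw [sub_one_mul_sub_div_lt_one_iff hb haE hE, exp_lt_exp, div_lt_div_iff_of_pos_right hν]
end
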